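/- With the sawtooth construction as above and a_{n,k} := sup_{x' ∈ Q(n,k)} f_{n−1}(x'), for every n ∈ ℕ₀, k ∈ {0,…,2^{nm}−1}^{d-1}, and every x' ∈ Q(n,k), one has f(x') − a_{n,k} ≤ 2^{−γmn}. -/

import Mathlib

/-- The tent function `ψ(x') = (1/2 − ‖x' − (1/2,…,1/2)‖_∞)·1_{(0,1)^{n}}(x')`
(the norm on `Fin n → ℝ` is the sup norm). -/
noncomputable def sawPsi (n : ℕ) (x : Fin n → ℝ) : ℝ :=
  Set.indicator {y : Fin n → ℝ | ∀ i, 0 < y i ∧ y i < 1}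
    (fun y => 1 / 2 - ‖y - fun _ => (1 / 2 : ℝ)‖) x

/-- `g_j(x') = Σ_{k ∈ {0,…,2^{jm}−1}^{n}} ψ(2^{jm}·x' − k)`. -/
noncomputable def sawG (n m j : ℕ) (x : Fin n → ℝ) : ℝ :=
  ∑ k : Fin n → Fin (2 ^ (j * m)),
    sawPsi n (fun i => 2 ^ (j * m) * x i - (k i : ℝ))

/-- Partial sum `f_{N−1}(x') = Σ_{j=0}^{N−1} 2^{−γjm}·g_j(x')` (so `sawF n m γ 0 = f_{−1} ≡ 0`). -/
noncomputable def sawFpartial (n m : ℕ) (γ : ℝ) (N : ℕ) (x : Fin n → ℝ) : ℝ :=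
  ∑ j ∈ Finset.range N, (2 : ℝ) ^ (-(γ * ((j : ℝ) * m))) * sawG n m j x

/-- The sawtooth boundary function `f(x') = Σ_{j=0}^∞ 2^{−γjm}·g_j(x')`. -/
noncomputable def sawF (n m : ℕ) (γ : ℝ) (x : Fin n → ℝ) : ℝ :=
  ∑' j : ℕ, (2 : ℝ) ^ (-(γ * ((j : ℝ) * m))) * sawG n m j x

/-- The dyadic subcube `Q(n,k) = {x' : 2^{nm}·x' − k ∈ (0,1)^{d-1}}`. -/
def sawQ (dd m n : ℕ) (k : Fin dd → Fin (2 ^ (n * m))) : Set (Fin dd → ℝ) :=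
  {x | ∀ i, (k i : ℝ) < 2 ^ (n * m) * x i ∧ 2 ^ (n * m) * x i < (k i : ℝ) + 1}

/-- `a_{n,k} = sup_{x' ∈ Q(n,k)} f_{n−1}(x')`. -/
noncomputable def sawA (dd m : ℕ) (γ : ℝ) (n : ℕ) (k : Fin dd → Fin (2 ^ (n * m))) : ℝ :=
  sSup (sawFpartial dd m γ n '' sawQ dd m n k)

/-!
At each point at most one tent in `g_j` is nonzero (the translated open unit cubes are
disjoint), so `0 ≤ g_j ≤ 1/2`. Since also `r := 2^{−γm} ≤ 1/2`, the `j`-th term of the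
series for `f` is at most `(1 − r)·r^j`, so the tail `Σ_{j ≥ n}` is at most
`(1 − r)·r^n/(1 − r) = r^n = 2^{−γmn}`, while the first `n` terms are `f_{n−1}(x') ≤ a_{n,k}`.
-/

lemma tsum_nat_add_le_pow_of_le_geometric {f : ℕ → ℝ} {r : ℝ} (hr0 : 0 ≤ r) (hr1 : r < 1)
    (hf0 : ∀ j, 0 ≤ f j) (hf : ∀ j, f j ≤ (1 - r) * r ^ j) (n : ℕ) :
    ∑' j, f (j + n) ≤ r ^ n := by
  have hgeom := summable_geometric_of_lt_one hr0 hr1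
  have hsum : Summable f := .of_nonneg_of_le hf0 hf (hgeom.mul_left _)
  calc ∑' j, f (j + n) ≤ ∑' j, (1 - r) * r ^ n * r ^ j :=
        (hsum.comp_injective (add_left_injective n)).tsum_le_tsum
          (fun j => (hf (j + n)).trans_eq (by ring)) (hgeom.mul_left _)
    _ = r ^ n := by
        rw [tsum_mul_left, tsum_geometric_of_lt_one hr0 hr1]
        field_simp [(sub_pos.2 hr1).ne']

lemma sawPsi_nonneg (d : ℕ) (x : Fin d → ℝ) : 0 ≤ sawPsi d x := by
  refine Set.indicator_nonneg (fun y hy => ?_) x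
  have : ‖y - fun _ => (1 / 2 : ℝ)‖ ≤ 1 / 2 := by
    refine (pi_norm_le_iff_of_nonneg (by norm_num)).2 fun i => ?_
    rw [Pi.sub_apply, Real.norm_eq_abs, abs_le]
    constructor <;> linarith [hy i]
  linarith

lemma sawPsi_le_half (d : ℕ) (x : Fin d → ℝ) : sawPsi d x ≤ 1 / 2 := by
  unfold sawPsi
  by_cases h : x ∈ {y : Fin d → ℝ | ∀ i, 0 < y i ∧ y i < 1}
  · rw [Set.indicator_of_mem h]
    linarith [norm_nonneg (x - fun _ => (1 / 2 : ℝ))]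
  · rw [Set.indicator_of_notMem h]
    norm_num

lemma sawPsi_mem_of_ne_zero {d : ℕ} {x : Fin d → ℝ} (h : sawPsi d x ≠ 0) :
    ∀ i, 0 < x i ∧ x i < 1 := by
  by_contra hc
  exact h (Set.indicator_of_notMem (by simpa using hc) _)

lemma eq_of_sawPsi_sub_ne_zero {d N : ℕ} {y : Fin d → ℝ} {k k' : Fin d → Fin N}
    (hk : sawPsi d (fun i => y i - (k i : ℝ)) ≠ 0)
    (hk' : sawPsi d (fun i => y i - (k' i : ℝ)) ≠ 0) : k = k' := by
  funext i
  have h := sawPsi_mem_of_ne_zero hk i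
  have h' := sawPsi_mem_of_ne_zero hk' i
  have hlt : (k i : ℕ) < k' i + 1 := by exact_mod_cast (by linarith [h.2, h'.1] :
    ((k i : ℕ) : ℝ) < (k' i : ℕ) + 1)
  have hlt' : (k' i : ℕ) < k i + 1 := by exact_mod_cast (by linarith [h.1, h'.2] :
    ((k' i : ℕ) : ℝ) < (k i : ℕ) + 1)
  exact Fin.ext (by omega)

lemma sawG_nonneg (d m j : ℕ) (x : Fin d → ℝ) : 0 ≤ sawG d m j x :=
  Finset.sum_nonneg fun _ _ => sawPsi_nonneg _ _

lemma sawG_le_half (d m j : ℕ) (x : Fin d → ℝ) : sawG d m j x ≤ 1 / 2 := by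
  unfold sawG
  by_cases h : ∃ k : Fin d → Fin (2 ^ (j * m)),
      sawPsi d (fun i => 2 ^ (j * m) * x i - (k i : ℝ)) ≠ 0
  · obtain ⟨k₀, hk₀⟩ := h
    rw [Finset.sum_eq_single_of_mem k₀ (Finset.mem_univ _) fun k _ hk =>
      not_not.1 fun hne => hk (eq_of_sawPsi_sub_ne_zero hne hk₀)]
    exact sawPsi_le_half _ _
  · push Not at h
    simp [h]

lemma two_rpow_neg_mul_le_half {m γ : ℝ} (hm : 1 ≤ m * γ) : (2 : ℝ) ^ (-(γ * m)) ≤ 1 / 2 := by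
  calc (2 : ℝ) ^ (-(γ * m)) ≤ 2 ^ (-1 : ℝ) :=
        Real.rpow_le_rpow_of_exponent_le (by norm_num) (by linarith)
    _ = 1 / 2 := by norm_num [Real.rpow_neg_one]

lemma two_rpow_neg_mul_natCast_mul (γ m : ℝ) (j : ℕ) :
    (2 : ℝ) ^ (-(γ * (j * m))) = ((2 : ℝ) ^ (-(γ * m))) ^ j := by
  rw [← Real.rpow_natCast, ← Real.rpow_mul (by norm_num)]
  ring_nf

lemma sawF_term_le_geometric {d m : ℕ} {γ : ℝ} (hm : 1 ≤ (m : ℝ) * γ) (j : ℕ)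
    (x : Fin d → ℝ) :
    (2 : ℝ) ^ (-(γ * ((j : ℝ) * m))) * sawG d m j x ≤
      (1 - (2 : ℝ) ^ (-(γ * m))) * ((2 : ℝ) ^ (-(γ * m))) ^ j := by
  rw [two_rpow_neg_mul_natCast_mul, mul_comm]
  gcongr
  linarith [sawG_le_half d m j x, two_rpow_neg_mul_le_half hm]

lemma sawFpartial_le_sawA {d m : ℕ} {γ : ℝ} {n : ℕ} {k : Fin d → Fin (2 ^ (n * m))}
    {x : Fin d → ℝ} (hx : x ∈ sawQ d m n k) :
    sawFpartial d m γ n x ≤ sawA d m γ n k := by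
  refine le_csSup ⟨∑ j ∈ Finset.range n, (2 : ℝ) ^ (-(γ * ((j : ℝ) * m))) * (1 / 2), ?_⟩
    ⟨x, hx, rfl⟩
  rintro _ ⟨y, -, rfl⟩
  exact Finset.sum_le_sum fun j _ => by gcongr; exact sawG_le_half _ _ _ _

theorem sawF_sub_a_upper_general (d m : ℕ) (γ : ℝ)
    (hm1 : 1 ≤ (m : ℝ) * γ)
    (n : ℕ) (k : Fin (d - 1) → Fin (2 ^ (n * m)))
    (x : Fin (d - 1) → ℝ) (hx : x ∈ sawQ (d - 1) m n k) :
    sawF (d - 1) m γ x - sawA (d - 1) m γ n k ≤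
      (2 : ℝ) ^ (-(γ * ((m : ℝ) * n))) := by
  set r : ℝ := (2 : ℝ) ^ (-(γ * m))
  have hr0 : 0 ≤ r := Real.rpow_nonneg (by norm_num) _
  have hr1 : r < 1 := (two_rpow_neg_mul_le_half hm1).trans_lt (by norm_num)
  have hterm0 : ∀ j : ℕ, 0 ≤ (2 : ℝ) ^ (-(γ * ((j : ℝ) * m))) * sawG (d - 1) m j x :=
    fun j => mul_nonneg (Real.rpow_nonneg (by norm_num) _) (sawG_nonneg _ _ _ _)
  have hterm := fun j => sawF_term_le_geometric (d := d - 1) hm1 j x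
  have hsum : Summable fun j : ℕ => (2 : ℝ) ^ (-(γ * ((j : ℝ) * m))) * sawG (d - 1) m j x :=
    .of_nonneg_of_le hterm0 hterm ((summable_geometric_of_lt_one hr0 hr1).mul_left _)
  have htail := tsum_nat_add_le_pow_of_le_geometric hr0 hr1 hterm0 hterm n
  have hrn : r ^ n = (2 : ℝ) ^ (-(γ * ((m : ℝ) * n))) := by
    rw [← two_rpow_neg_mul_natCast_mul, mul_comm (n : ℝ)]
  have hpartial := sawFpartial_le_sawA (γ := γ) hx
  rw [sawFpartial] at hpartial
  rw [sawF, ← hsum.sum_add_tsum_nat_add n]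
  linarith

/-- Lemma 7.2(iv): on each dyadic subcube `Q(n,k)`, one has
`f(x') − a_{n,k} ≤ 2^{−γmn}`. -/
theorem sawF_sub_a_upper (d m : ℕ) (γ : ℝ) (hd : 2 ≤ d)
    (hγ1 : ((d : ℝ) - 1) / d < γ) (hγ2 : γ < 1)
    (hm1 : 1 ≤ (m : ℝ) * γ) (hm2 : 4 ≤ (m : ℝ) * (1 - γ))
    (n : ℕ) (k : Fin (d - 1) → Fin (2 ^ (n * m)))
    (x : Fin (d - 1) → ℝ) (hx : x ∈ sawQ (d - 1) m n k) :
    sawF (d - 1) m γ x - sawA (d - 1) m γ n k ≤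
      (2 : ℝ) ^ (-(γ * ((m : ℝ) * n))) :=
  sawF_sub_a_upper_general d m γ hm1 n k x hx
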